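/- arXiv:2205.06583 — 2 statements merged into one kernel-verified Lean document; each statement's English description precedes it below -/
import Mathlib

section
/- If V : Δ(Θ) → ℝ is convex, then the map μ ↦ E[V(μ(s)) | μ] = Σ_s α_s(μ) V(μ(s)) is convex in μ, where α_s(μ) = Σ_θ μ_θ f_θ(s) is the probability of signal s under belief μ and μ(s) is the Bayesian posterior (defined when α_s(μ) > 0). -/
/-!
The summand `α_s(μ) V(μ(s))` is the perspective `t V(m / t)` of `V` evaluated at the unnormalized
posterior `m = (μ_θ f_θ(s))_θ`, whose total mass is `t = α_s(μ)`. The map `μ ↦ m` is linear, and the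
perspective of a convex function is convex on the nonnegative orthant: it is positively homogeneous,
and subadditive because `(m + m') / (t + t')` is the convex combination of `m / t` and `m' / t'` with
weights `t / (t + t')` and `t' / (t + t')`.
-/

open Finset

noncomputable def post {Θ S : Type*} [Fintype Θ] (f : Θ → S → ℝ) (μ : Θ → ℝ) (s : S) :
    Θ → ℝ :=
  fun θ => μ θ * f θ s / (∑ θ', μ θ' * f θ' s)

/-- The signal probability `α_s(μ) = Σ_θ μ_θ f_θ(s)`. -/
def sigProb {Θ : Type*} [Fintype Θ] (f : Θ → S → ℝ) (μ : Θ → ℝ) (s : S) : ℝ :=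
  ∑ θ, μ θ * f θ s

noncomputable def Eexp {Θ S : Type*} [Fintype Θ] [Fintype S] (f : Θ → S → ℝ)
    (V : (Θ → ℝ) → ℝ) (μ : Θ → ℝ) : ℝ :=
  ∑ s, sigProb f μ s * V (post f μ s)

theorem ConvexOn.finset_sum {𝕜 E β ι : Type*} [Semiring 𝕜] [PartialOrder 𝕜] [AddCommMonoid E]
    [AddCommMonoid β] [PartialOrder β] [IsOrderedAddMonoid β] [SMul 𝕜 E]
    [DistribMulAction 𝕜 β] {s : Set E} (hs : Convex 𝕜 s) (t : Finset ι) {f : ι → E → β}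
    (hf : ∀ i ∈ t, ConvexOn 𝕜 s (f i)) : ConvexOn 𝕜 s fun x => ∑ i ∈ t, f i x :=
  ⟨hs, fun _ hx _ hy _ _ ha hb hab => by
    simpa only [smul_sum, ← sum_add_distrib] using
      sum_le_sum fun i hi => (hf i hi).2 hx hy ha hb hab⟩

section Perspective

variable {ι : Type*} [Fintype ι]

theorem inv_sum_smul_mem_stdSimplex {x : ι → ℝ} (hx : 0 ≤ x) (hpos : 0 < ∑ i, x i) :
    (∑ i, x i)⁻¹ • x ∈ stdSimplex ℝ ι :=
  ⟨fun i => smul_nonneg (inv_nonneg.2 hpos.le) (hx i), by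
    simp only [Pi.smul_apply, smul_eq_mul, ← mul_sum, inv_mul_cancel₀ hpos.ne']⟩

theorem eq_zero_of_nonneg_of_sum_eq_zero {x : ι → ℝ} (hx : 0 ≤ x) (h : ∑ i, x i = 0) : x = 0 :=
  funext fun i => (sum_eq_zero_iff_of_nonneg fun i _ => hx i).1 h i (mem_univ i)

/-- The perspective `(t, x) ↦ t V(x / t)` of `V`, taken at `t = ∑ i, x i`. Since `0⁻¹ = 0` it
vanishes at `x = 0`, so it extends `V` from the standard simplex to the whole nonnegative orthant. -/
noncomputable def perspective (V : (ι → ℝ) → ℝ) (x : ι → ℝ) : ℝ :=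
  (∑ i, x i) * V ((∑ i, x i)⁻¹ • x)

theorem perspective_smul (V : (ι → ℝ) → ℝ) (t : ℝ) (x : ι → ℝ) :
    perspective V (t • x) = t * perspective V x := by
  rcases eq_or_ne t 0 with rfl | ht
  · simp [perspective]
  · simp only [perspective, Pi.smul_apply, smul_eq_mul, ← mul_sum, smul_smul, mul_inv_rev,
      inv_mul_cancel_right₀ ht, mul_assoc]

theorem perspective_add_le {V : (ι → ℝ) → ℝ} (hV : ConvexOn ℝ (stdSimplex ℝ ι) V)
    {x y : ι → ℝ} (hx : 0 ≤ x) (hy : 0 ≤ y) :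
    perspective V (x + y) ≤ perspective V x + perspective V y := by
  set X := ∑ i, x i
  set Y := ∑ i, y i
  have hX0 : 0 ≤ X := sum_nonneg fun i _ => hx i
  have hY0 : 0 ≤ Y := sum_nonneg fun i _ => hy i
  rcases hX0.eq_or_lt with hX | hX
  · simp [eq_zero_of_nonneg_of_sum_eq_zero hx hX.symm, perspective]
  rcases hY0.eq_or_lt with hY | hY
  · simp [eq_zero_of_nonneg_of_sum_eq_zero hy hY.symm, perspective]
  have hsum : ∑ i, (x + y) i = X + Y := sum_add_distrib
  have hmix : (X + Y)⁻¹ • (x + y) = (X / (X + Y)) • (X⁻¹ • x) + (Y / (X + Y)) • (Y⁻¹ • y) := by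
    rw [smul_smul, smul_smul, show X / (X + Y) * X⁻¹ = (X + Y)⁻¹ by field_simp,
      show Y / (X + Y) * Y⁻¹ = (X + Y)⁻¹ by field_simp, smul_add]
  calc perspective V (x + y)
      = (X + Y) * V ((X / (X + Y)) • (X⁻¹ • x) + (Y / (X + Y)) • (Y⁻¹ • y)) := by
        rw [perspective, hsum, hmix]
    _ ≤ (X + Y) * ((X / (X + Y)) • V (X⁻¹ • x) + (Y / (X + Y)) • V (Y⁻¹ • y)) := by
        gcongr
        exact hV.2 (inv_sum_smul_mem_stdSimplex hx hX) (inv_sum_smul_mem_stdSimplex hy hY)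
          (by positivity) (by positivity) (by field_simp)
    _ = X * V (X⁻¹ • x) + Y * V (Y⁻¹ • y) := by
        simp only [smul_eq_mul]
        field_simp

theorem convexOn_perspective {V : (ι → ℝ) → ℝ} (hV : ConvexOn ℝ (stdSimplex ℝ ι) V) :
    ConvexOn ℝ (Set.Ici 0) (perspective V) :=
  ⟨convex_Ici 0, fun x hx y hy a b ha hb _ => by
    simpa only [perspective_smul, smul_eq_mul] using
      perspective_add_le hV (smul_nonneg ha hx) (smul_nonneg hb hy)⟩

end Perspective

theorem eexp_eq_sum_perspective {Θ S : Type*} [Fintype Θ] [Fintype S] (f : Θ → S → ℝ)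
    (V : (Θ → ℝ) → ℝ) (μ : Θ → ℝ) :
    Eexp f V μ = ∑ s, perspective V (μ * fun θ => f θ s) := by
  refine sum_congr rfl fun s _ => ?_
  simp only [perspective, Pi.mul_apply]
  congr 2
  funext θ
  simp only [post, Pi.smul_apply, Pi.mul_apply, smul_eq_mul, div_eq_inv_mul]

theorem expected_posterior_value_convex_general {Θ S : Type*} [Fintype Θ] [Fintype S]
    (f : Θ → S → ℝ) (hf : ∀ θ s, 0 ≤ f θ s)
    (V : (Θ → ℝ) → ℝ) (hV : ConvexOn ℝ (stdSimplex ℝ Θ) V) :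
    ConvexOn ℝ (stdSimplex ℝ Θ) (Eexp f V) := by
  rw [funext (eexp_eq_sum_perspective f V)]
  refine ConvexOn.finset_sum (convex_stdSimplex ℝ Θ) univ fun s _ => ?_
  have hmass : stdSimplex ℝ Θ ⊆ (LinearMap.mulRight ℝ fun θ => f θ s) ⁻¹' Set.Ici 0 :=
    fun μ hμ θ => mul_nonneg (hμ.1 θ) (hf θ s)
  exact ((convexOn_perspective hV).comp_linearMap _).subset hmass (convex_stdSimplex ℝ Θ)

/-- if `V` is convex on the simplex, then the expected value of `V` at the
Bayesian posterior, `μ ↦ Σ_s α_s(μ) V(μ(s))` (terms with `α_s(μ) = 0` contributing `0`),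
is convex in the belief `μ` on the simplex. -/
theorem expected_posterior_value_convex {Θ S : Type*} [Fintype Θ] [Fintype S]
    (f : Θ → S → ℝ) (hf : ∀ θ s, 0 ≤ f θ s) (hfsum : ∀ θ, ∑ s, f θ s = 1)
    (V : (Θ → ℝ) → ℝ) (hV : ConvexOn ℝ (stdSimplex ℝ Θ) V) :
    ConvexOn ℝ (stdSimplex ℝ Θ) (Eexp f V) :=
  expected_posterior_value_convex_general f hf V hV
end

section
/- The upfront fee scheme is optimal: for any fee scheme c under which the DM strictly prefers acquiring information (V_0^N(μ_0; c) > π(μ_0)), the discounted expected total fee ρ(μ_0; c) is strictly less than φ(μ_0) := V_0^N(μ_0; 0) − π(μ_0). Hence sup over all acceptable fee schemes of ρ(μ_0;c) equals φ(μ_0), achieved by charging the single upfront fee φ(μ_0). -/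
/-!
Under the `c`-optimal strategy the value is the gross payoff of that strategy minus the fees it
collects, and that gross payoff is at most the fee-free value `V(μ₀; 0)`, since the strategy is
available without fees too. Hence a scheme the DM accepts collects less than
`φ = V(μ₀; 0) − π(μ₀)`. Conversely, a single upfront fee `t ∈ [0, φ)` is accepted and collects
exactly `t`, so `φ` is the supremum.
-/

open Finset

namespace StoppingFee

variable {Θ Sig : Type*} [Fintype Θ] [Fintype Sig]

/-- Bayesian posterior after signal `s`. -/
noncomputable def post (f : Θ → Sig → ℝ) (μ : Θ → ℝ) (s : Sig) : Θ → ℝ :=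
  fun θ => μ θ * f θ s / (∑ θ', μ θ' * f θ' s)

/-- Probability of signal `s` under belief `μ`. -/
def sigProb (f : Θ → Sig → ℝ) (μ : Θ → ℝ) (s : Sig) : ℝ :=
  ∑ θ, μ θ * f θ s

/-- Value functions under the history-dependent fee scheme `c`, indexed by the number `k`
of remaining periods, the current history `h` of signals, and the current belief `μ`:
`V_n^N(μ; h_n; c)` with `k = N − n`.  Continuing costs, in expectation, the discounted fee
attached to next period's history. -/
noncomputable def valC (f : Θ → Sig → ℝ) (π : (Θ → ℝ) → ℝ) (δ : ℝ) (c : List Sig → ℝ) :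
    ℕ → List Sig → (Θ → ℝ) → ℝ
  | 0, _, μ => π μ
  | (k + 1), h, μ => max (π μ)
      (δ * ((∑ s, sigProb f μ s * valC f π δ c k (h ++ [s]) (post f μ s)) -
            ∑ s, sigProb f μ s * c (h ++ [s])))

open Classical in
/-- Discounted expected total fee paid under the `c`-optimal strategy (which stops at a
history exactly when the value there equals the stopping payoff). -/
noncomputable def rhoC (f : Θ → Sig → ℝ) (π : (Θ → ℝ) → ℝ) (δ : ℝ) (c : List Sig → ℝ) :
    ℕ → List Sig → (Θ → ℝ) → ℝ
  | 0, _, _ => 0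
  | (k + 1), h, μ =>
      if valC f π δ c (k + 1) h μ = π μ then 0
      else δ * ∑ s, sigProb f μ s *
        (c (h ++ [s]) + rhoC f π δ c k (h ++ [s]) (post f μ s))

open Classical in
/-- Discounted expected *gross* payoff of the `c`-optimal strategy when all fees are set
to zero (the strategy is the one optimal for `c`, but no fees are paid). -/
noncomputable def grossC (f : Θ → Sig → ℝ) (π : (Θ → ℝ) → ℝ) (δ : ℝ) (c : List Sig → ℝ) :
    ℕ → List Sig → (Θ → ℝ) → ℝ
  | 0, _, μ => π μ
  | (k + 1), h, μ =>
      if valC f π δ c (k + 1) h μ = π μ then π μ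
      else δ * ∑ s, sigProb f μ s * grossC f π δ c k (h ++ [s]) (post f μ s)

/-- Period-0 value with horizon `k + 1`: continuing also requires paying the upfront fee
`c ∅` immediately. -/
noncomputable def val0 (f : Θ → Sig → ℝ) (π : (Θ → ℝ) → ℝ) (δ : ℝ) (c : List Sig → ℝ)
    (k : ℕ) (μ : Θ → ℝ) : ℝ :=
  max (π μ)
    (δ * ((∑ s, sigProb f μ s * valC f π δ c k [s] (post f μ s)) -
          ∑ s, sigProb f μ s * c [s]) - c [])

open Classical in
/-- Period-0 discounted expected total fee under the `c`-optimal strategy. -/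
noncomputable def rho0 (f : Θ → Sig → ℝ) (π : (Θ → ℝ) → ℝ) (δ : ℝ) (c : List Sig → ℝ)
    (k : ℕ) (μ : Θ → ℝ) : ℝ :=
  if val0 f π δ c k μ = π μ then 0
  else c [] + δ * ∑ s, sigProb f μ s * (c [s] + rhoC f π δ c k [s] (post f μ s))

open Classical in
/-- Period-0 discounted expected gross payoff of the `c`-optimal strategy with zero fees. -/
noncomputable def gross0 (f : Θ → Sig → ℝ) (π : (Θ → ℝ) → ℝ) (δ : ℝ) (c : List Sig → ℝ)
    (k : ℕ) (μ : Θ → ℝ) : ℝ :=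
  if val0 f π δ c k μ = π μ then π μ
  else δ * ∑ s, sigProb f μ s * grossC f π δ c k [s] (post f μ s)


section Decomposition

variable (f : Θ → Sig → ℝ) (π : (Θ → ℝ) → ℝ) (δ : ℝ) (c : List Sig → ℝ)

theorem valC_eq_grossC_sub_rhoC :
    ∀ (k : ℕ) (h : List Sig) (μ : Θ → ℝ),
      valC f π δ c k h μ = grossC f π δ c k h μ - rhoC f π δ c k h μ
  | 0, h, μ => by simp [valC, grossC, rhoC]
  | k + 1, h, μ => by
    rw [grossC, rhoC]
    split_ifs with hstop
    · rw [hstop, sub_zero]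
    · rw [valC] at hstop ⊢
      rw [(max_choice _ _).resolve_left hstop]
      simp only [valC_eq_grossC_sub_rhoC k, mul_sub, mul_add, sum_sub_distrib, sum_add_distrib]
      ring

theorem val0_eq_gross0_sub_rho0 (k : ℕ) (μ : Θ → ℝ) :
    val0 f π δ c k μ = gross0 f π δ c k μ - rho0 f π δ c k μ := by
  rw [gross0, rho0]
  split_ifs with hstop
  · rw [hstop, sub_zero]
  · rw [val0] at hstop ⊢
    rw [(max_choice _ _).resolve_left hstop]
    simp only [valC_eq_grossC_sub_rhoC, mul_sub, mul_add, sum_sub_distrib, sum_add_distrib]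
    ring

end Decomposition

section GrossPayoff

variable {f : Θ → Sig → ℝ} (π : (Θ → ℝ) → ℝ) {δ : ℝ} (c : List Sig → ℝ)

omit [Fintype Sig] in
theorem sigProb_nonneg (hf : ∀ θ s, 0 ≤ f θ s) {μ : Θ → ℝ} (hμ : ∀ θ, 0 ≤ μ θ) (s : Sig) :
    0 ≤ sigProb f μ s :=
  sum_nonneg fun θ _ => mul_nonneg (hμ θ) (hf θ s)

omit [Fintype Sig] in
theorem post_nonneg (hf : ∀ θ s, 0 ≤ f θ s) {μ : Θ → ℝ} (hμ : ∀ θ, 0 ≤ μ θ) (s : Sig) (θ : Θ) :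
    0 ≤ post f μ s θ :=
  div_nonneg (mul_nonneg (hμ θ) (hf θ s)) (sigProb_nonneg hf hμ s)

theorem grossC_le_valC_zero (hf : ∀ θ s, 0 ≤ f θ s) (hδ : 0 ≤ δ) :
    ∀ (k : ℕ) (h : List Sig) (μ : Θ → ℝ), (∀ θ, 0 ≤ μ θ) →
      grossC f π δ c k h μ ≤ valC f π δ (fun _ => 0) k h μ
  | 0, h, μ, _ => by simp [valC, grossC]
  | k + 1, h, μ, hμ => by
    rw [grossC, valC]
    split_ifs
    · exact le_max_left _ _
    · refine le_trans ?_ (le_max_right _ _)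
      simp only [mul_zero, sum_const_zero, sub_zero]
      gcongr with s
      · exact sigProb_nonneg hf hμ s
      · exact grossC_le_valC_zero hf hδ k _ _ (post_nonneg hf hμ s)

theorem gross0_le_val0_zero (hf : ∀ θ s, 0 ≤ f θ s) (hδ : 0 ≤ δ) (k : ℕ) {μ : Θ → ℝ}
    (hμ : ∀ θ, 0 ≤ μ θ) :
    gross0 f π δ c k μ ≤ val0 f π δ (fun _ => 0) k μ := by
  rw [gross0, val0]
  split_ifs
  · exact le_max_left _ _
  · refine le_trans ?_ (le_max_right _ _)
    simp only [mul_zero, sum_const_zero, sub_zero]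
    gcongr with s
    · exact sigProb_nonneg hf hμ s
    · exact grossC_le_valC_zero π c hf hδ k _ _ (post_nonneg hf hμ s)

theorem rho0_lt_of_accepted (hf : ∀ θ s, 0 ≤ f θ s) (hδ : 0 ≤ δ) (k : ℕ) {μ : Θ → ℝ}
    (hμ : ∀ θ, 0 ≤ μ θ) (haccept : π μ < val0 f π δ c k μ) :
    rho0 f π δ c k μ < val0 f π δ (fun _ => 0) k μ - π μ := by
  have hsplit := val0_eq_gross0_sub_rho0 f π δ c k μ
  have hgross := gross0_le_val0_zero π c hf hδ k hμ
  linarith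

end GrossPayoff

section UpfrontFee

variable (f : Θ → Sig → ℝ) (π : (Θ → ℝ) → ℝ) (δ : ℝ)

theorem valC_congr_fee {c c' : List Sig → ℝ} (hcc' : ∀ h, h ≠ [] → c h = c' h) :
    ∀ (k : ℕ) (h : List Sig) (μ : Θ → ℝ), valC f π δ c k h μ = valC f π δ c' k h μ
  | 0, _, _ => rfl
  | k + 1, h, μ => by
    simp only [valC, valC_congr_fee hcc' k, hcc' _ (List.append_ne_nil_of_right_ne_nil h
      (List.cons_ne_nil _ _))]

theorem rhoC_eq_zero_of_fee_eq_zero {c : List Sig → ℝ} (hc : ∀ h, h ≠ [] → c h = 0) :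
    ∀ (k : ℕ) (h : List Sig) (μ : Θ → ℝ), rhoC f π δ c k h μ = 0
  | 0, _, _ => rfl
  | k + 1, h, μ => by
    simp [rhoC, rhoC_eq_zero_of_fee_eq_zero hc k, hc]

def upfrontFee {α : Type*} (t : ℝ) : List α → ℝ := fun h => if h = [] then t else 0

theorem upfrontFee_nonneg {α : Type*} {t : ℝ} (ht : 0 ≤ t) (h : List α) :
    0 ≤ upfrontFee t h := by
  unfold upfrontFee
  split_ifs <;> simp [ht]

theorem upfrontFee_of_ne_nil {α : Type*} (t : ℝ) {h : List α} (hh : h ≠ []) :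
    upfrontFee t h = 0 :=
  if_neg hh

theorem val0_upfrontFee {t : ℝ} (ht : 0 ≤ t) (k : ℕ) (μ : Θ → ℝ) :
    val0 f π δ (upfrontFee t) k μ = max (π μ) (val0 f π δ (fun _ => 0) k μ - t) := by
  have hval : ∀ s : Sig, valC f π δ (upfrontFee t) k [s] (post f μ s) =
      valC f π δ (fun _ => 0) k [s] (post f μ s) :=
    fun s => valC_congr_fee f π δ (fun _ => upfrontFee_of_ne_nil t) k _ _
  have hlater : ∀ s : Sig, upfrontFee t [s] = 0 :=
    fun s => upfrontFee_of_ne_nil t (List.cons_ne_nil _ _)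
  have hfirst : upfrontFee t ([] : List Sig) = t := if_pos rfl
  simp only [val0, hval, hlater, hfirst, mul_zero, sum_const_zero, sub_zero]
  rw [← max_sub_sub_right, ← max_assoc, max_eq_left (sub_le_self _ ht)]

theorem rho0_upfrontFee {t : ℝ} (k : ℕ) {μ : Θ → ℝ}
    (hcont : val0 f π δ (upfrontFee t) k μ ≠ π μ) :
    rho0 f π δ (upfrontFee t) k μ = t := by
  simp [rho0, hcont, upfrontFee,
    rhoC_eq_zero_of_fee_eq_zero f π δ (fun _ => upfrontFee_of_ne_nil t)]

end UpfrontFee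

theorem upfront_fee_optimal_general (f : Θ → Sig → ℝ)
    (hf : ∀ θ s, 0 ≤ f θ s)
    (π : (Θ → ℝ) → ℝ) (δ : ℝ) (hδ0 : 0 < δ)
    (μ0 : Θ → ℝ) (hμ0 : μ0 ∈ stdSimplex ℝ Θ) (k : ℕ)
    (hnontrivial : π μ0 < val0 f π δ (fun _ => 0) k μ0) :
    (∀ c : List Sig → ℝ, (∀ h, 0 ≤ c h) → π μ0 < val0 f π δ c k μ0 →
      rho0 f π δ c k μ0 < val0 f π δ (fun _ => 0) k μ0 - π μ0) ∧
    IsLUB {r : ℝ | ∃ c : List Sig → ℝ, (∀ h, 0 ≤ c h) ∧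
        π μ0 < val0 f π δ c k μ0 ∧ r = rho0 f π δ c k μ0}
      (val0 f π δ (fun _ => 0) k μ0 - π μ0) := by
  have hbound : ∀ c : List Sig → ℝ, (∀ h, 0 ≤ c h) → π μ0 < val0 f π δ c k μ0 →
      rho0 f π δ c k μ0 < val0 f π δ (fun _ => 0) k μ0 - π μ0 :=
    fun c _ haccept => rho0_lt_of_accepted π c hf hδ0.le k hμ0.1 haccept
  refine ⟨hbound, (isLUB_Ico (sub_pos.2 hnontrivial)).of_subset_of_superset isLUB_Iio ?_ ?_⟩
  · rintro t ⟨ht0, htφ⟩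
    have haccept : π μ0 < val0 f π δ (upfrontFee t) k μ0 := by
      rw [val0_upfrontFee f π δ ht0]
      exact lt_max_of_lt_right (by linarith)
    exact ⟨upfrontFee t, upfrontFee_nonneg ht0, haccept,
      (rho0_upfrontFee f π δ k haccept.ne').symm⟩
  · rintro _ ⟨c, hc, haccept, rfl⟩
    exact hbound c hc haccept

/-- Theorem 1: optimality of the upfront fee scheme. For every
nonnegative fee scheme `c` under which the DM strictly prefers acquiring information
(`V_0^N(μ_0; c) > π(μ_0)`), the discounted expected total fee is strictly less than
`φ(μ_0) := V_0^N(μ_0; 0) − π(μ_0)`; hence the supremum of `ρ(μ_0; c)` over all such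
acceptable fee schemes equals `φ(μ_0)`, achieved by charging a single upfront fee. -/
theorem upfront_fee_optimal (f : Θ → Sig → ℝ)
    (hf : ∀ θ s, 0 ≤ f θ s) (hfsum : ∀ θ, ∑ s, f θ s = 1)
    (π : (Θ → ℝ) → ℝ) (δ : ℝ) (hδ0 : 0 < δ) (hδ1 : δ ≤ 1)
    (μ0 : Θ → ℝ) (hμ0 : μ0 ∈ stdSimplex ℝ Θ) (k : ℕ)
    (hnontrivial : π μ0 < val0 f π δ (fun _ => 0) k μ0) :
    (∀ c : List Sig → ℝ, (∀ h, 0 ≤ c h) → π μ0 < val0 f π δ c k μ0 →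
      rho0 f π δ c k μ0 < val0 f π δ (fun _ => 0) k μ0 - π μ0) ∧
    IsLUB {r : ℝ | ∃ c : List Sig → ℝ, (∀ h, 0 ≤ c h) ∧
        π μ0 < val0 f π δ c k μ0 ∧ r = rho0 f π δ c k μ0}
      (val0 f π δ (fun _ => 0) k μ0 - π μ0) :=
  upfront_fee_optimal_general f hf π δ hδ0 μ0 hμ0 k hnontrivial

end StoppingFee
end
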